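/- arXiv:1903.04829 — 3 statements merged into one kernel-verified Lean document; each statement's English description precedes it below -/
import Mathlib

section
/- The multinomial NML regret admits the representation C_L^n = ∑_{k=0}^n (n falling-factorial k)·((L-1) rising-factorial k)/(n^k · k!), where x falling-factorial k = x(x-1)⋯(x-k+1) and x rising-factorial k = x(x+1)⋯(x+k-1). -/
/-- Multinomial normalized maximum likelihood (NML) regret `C_k^n`. -/
noncomputable def regret (k n : ℕ) : ℝ :=
  ∑ v ∈ Finset.Nat.antidiagonalTuple k n,
    ((n.factorial : ℝ) / ∏ j, ((v j).factorial : ℝ)) * ∏ j, ((v j : ℝ) / n) ^ (v j)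

open Finset Polynomial

namespace MononenAux

/-- Finite difference auxiliary sum. -/
noncomputable def fd (N k : ℕ) (x : ℝ) : ℝ :=
  ∑ s ∈ range (N + 1), (-1 : ℝ) ^ s * (N.choose s : ℝ) * (x + s) ^ k

lemma fd_succ (N k : ℕ) (x : ℝ) : fd (N + 1) k x = fd N k x - fd N k (x + 1) := by
  have hx : fd N k x = ∑ s ∈ range (N + 1 + 1), (-1 : ℝ) ^ s * (N.choose s : ℝ) * (x + s) ^ k := by
    rw [sum_range_succ]
    simp [fd, Nat.choose_succ_self]
  rw [hx]
  unfold fd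
  rw [sum_range_succ' (fun s => (-1 : ℝ) ^ s * ((N + 1).choose s : ℝ) * (x + s) ^ k) (N + 1),
    sum_range_succ' (fun s => (-1 : ℝ) ^ s * (N.choose s : ℝ) * (x + s) ^ k) (N + 1)]
  have hterm : ∀ i ∈ range (N + 1),
      (-1 : ℝ) ^ (i + 1) * (((N + 1).choose (i + 1) : ℕ) : ℝ) * (x + ((i : ℕ) + 1 : ℕ)) ^ k
        = (-1 : ℝ) ^ (i + 1) * ((N.choose (i + 1) : ℕ) : ℝ) * (x + ((i : ℕ) + 1 : ℕ)) ^ k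
          - (-1 : ℝ) ^ i * ((N.choose i : ℕ) : ℝ) * ((x + 1) + (i : ℕ)) ^ k := by
    intro i _
    have hc : (((N + 1).choose (i + 1) : ℕ) : ℝ)
        = ((N.choose i : ℕ) : ℝ) + ((N.choose (i + 1) : ℕ) : ℝ) := by
      rw [Nat.choose_succ_succ N i]; push_cast; ring
    have hb : x + (((i : ℕ) + 1 : ℕ) : ℝ) = (x + 1) + (i : ℕ) := by push_cast; ring
    rw [hc, hb]; ring
  rw [sum_congr rfl hterm, sum_sub_distrib]
  simp only [Nat.choose_zero_right]
  push_cast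
  ring

lemma fd_eq : ∀ N : ℕ, ∀ k ≤ N, ∀ x : ℝ,
    fd N k x = if k = N then (-1 : ℝ) ^ N * (N.factorial : ℝ) else 0 := by
  intro N
  induction N with
  | zero =>
    intro k hk x
    interval_cases k
    simp [fd]
  | succ N ih =>
    intro k hk x
    rw [fd_succ]
    rcases Nat.lt_or_ge k (N + 1) with hkN | hkN
    · have hk' : k ≤ N := by omega
      rw [ih k hk' x, ih k hk' (x + 1), sub_self, if_neg (by omega)]
    · have hk1 : k = N + 1 := by omega
      subst hk1
      rw [if_pos rfl]
      have step1 : fd N (N + 1) x - fd N (N + 1) (x + 1)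
          = ∑ s ∈ range (N + 1), ((-1 : ℝ) ^ s * (N.choose s : ℝ)
              * ((x + s) ^ (N + 1) - ((x + 1) + s) ^ (N + 1))) := by
        unfold fd
        rw [← sum_sub_distrib]
        exact sum_congr rfl fun s _ => by ring
      have step2 : ∀ s ∈ range (N + 1),
          (-1 : ℝ) ^ s * (N.choose s : ℝ) * ((x + s) ^ (N + 1) - ((x + 1) + s) ^ (N + 1))
            = ∑ i ∈ range (N + 1),
                (-(((N + 1).choose i : ℕ) : ℝ)) * ((-1 : ℝ) ^ s * (N.choose s : ℝ) * (x + s) ^ i) := by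
        intro s _
        have hb : ((x + 1) + (s : ℝ)) ^ (N + 1)
            = ∑ i ∈ range (N + 2), (x + s) ^ i * (((N + 1).choose i : ℕ) : ℝ) := by
          rw [show (x + 1) + (s : ℝ) = (x + (s : ℝ)) + 1 by ring, add_pow]
          simp
        rw [hb, sum_range_succ, Nat.choose_self]
        have hre : (-1 : ℝ) ^ s * (N.choose s : ℝ) *
            ((x + s) ^ (N + 1) -
              ((∑ i ∈ range (N + 1), (x + s) ^ i * (((N + 1).choose i : ℕ) : ℝ))
                + (x + s) ^ (N + 1) * ((1 : ℕ) : ℝ)))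
            = -((-1 : ℝ) ^ s * (N.choose s : ℝ) *
                ∑ i ∈ range (N + 1), (x + s) ^ i * (((N + 1).choose i : ℕ) : ℝ)) := by
          push_cast
          ring
        rw [hre, Finset.mul_sum, ← sum_neg_distrib]
        exact sum_congr rfl fun i _ => by ring
      rw [step1, sum_congr rfl step2, sum_comm]
      have step3 : ∀ i ∈ range (N + 1),
          ∑ s ∈ range (N + 1),
              (-(((N + 1).choose i : ℕ) : ℝ)) * ((-1 : ℝ) ^ s * (N.choose s : ℝ) * (x + s) ^ i)
            = (-(((N + 1).choose i : ℕ) : ℝ)) * (if i = N then (-1 : ℝ) ^ N * (N.factorial : ℝ) else 0) := by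
        intro i hi
        rw [← Finset.mul_sum, ← fd, ih i (by simpa using Nat.lt_succ_iff.mp (mem_range.mp hi)) x]
      rw [sum_congr rfl step3]
      rw [Finset.sum_eq_single N (fun b _ hb => by rw [if_neg hb, mul_zero])
        (fun h => absurd (self_mem_range_succ N) h)]
      rw [if_pos rfl, Nat.choose_succ_self_right]
      push_cast [Nat.factorial_succ]
      ring

/-- LHS polynomial. -/
noncomputable def P (N : ℕ) : ℝ[X] :=
  ∑ s ∈ range (N + 1), C ((N.choose s * s ^ s : ℕ) : ℝ) * (X - C (s : ℝ)) ^ (N - s)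

/-- RHS polynomial. -/
noncomputable def Q (N : ℕ) : ℝ[X] :=
  ∑ m ∈ range (N + 1), C ((N.descFactorial m : ℕ) : ℝ) * X ^ (N - m)

lemma derivative_P (N : ℕ) : derivative (P (N + 1)) = C ((N : ℝ) + 1) * P N := by
  unfold P
  rw [map_sum, sum_range_succ, Nat.sub_self, pow_zero, mul_one, derivative_C, add_zero,
    Finset.mul_sum]
  apply sum_congr rfl
  intro s hs
  have hs' : s ≤ N := by simpa [Nat.lt_succ_iff] using hs
  rw [derivative_C_mul, derivative_X_sub_C_pow]
  have he : N + 1 - s - 1 = N - s := by omega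
  rw [he, ← mul_assoc, ← C_mul, ← mul_assoc, ← C_mul]
  congr 2
  have h0 : (N + 1).choose s * (N + 1 - s) = N.choose s * (N + 1) :=
    (Nat.choose_mul_succ_eq N s).symm
  have h1 : ((N + 1).choose s * s ^ s : ℕ) * ((N + 1 - s : ℕ)) = ((N + 1) * (N.choose s * s ^ s)) := by
    rw [mul_right_comm, h0]; ring
  exact_mod_cast congrArg (fun t : ℕ => (t : ℝ)) h1

lemma derivative_Q (N : ℕ) : derivative (Q (N + 1)) = C ((N : ℝ) + 1) * Q N := by
  unfold Q
  rw [map_sum, sum_range_succ, Nat.sub_self, pow_zero, mul_one, derivative_C, add_zero,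
    Finset.mul_sum]
  apply sum_congr rfl
  intro m hm
  have hm' : m ≤ N := by simpa [Nat.lt_succ_iff] using hm
  rw [derivative_C_mul, derivative_X_pow]
  have he : N + 1 - m - 1 = N - m := by omega
  rw [he, ← mul_assoc, ← C_mul, ← mul_assoc, ← C_mul]
  congr 2
  have h0 : (N + 1).descFactorial m * (N + 1 - m) = (N + 1) * N.descFactorial m := by
    rw [mul_comm ((N + 1).descFactorial m), ← Nat.descFactorial_succ,
      Nat.succ_descFactorial_succ]
  exact_mod_cast congrArg (fun t : ℕ => (t : ℝ)) h0

lemma eval_zero_P (N : ℕ) : eval 0 (P (N + 1)) = ((N + 1).factorial : ℝ) := by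
  unfold P
  rw [eval_finset_sum]
  have hterm : ∀ s ∈ range (N + 2),
      eval 0 (C (((N + 1).choose s * s ^ s : ℕ) : ℝ) * (X - C (s : ℝ)) ^ (N + 1 - s))
        = (-1 : ℝ) ^ (N + 1) * ((-1 : ℝ) ^ s * (((N + 1).choose s : ℕ) : ℝ) * ((0 : ℝ) + s) ^ (N + 1)) := by
    intro s hs
    have hs' : s ≤ N + 1 := by simpa [Nat.lt_succ_iff] using hs
    rw [eval_mul, eval_C, eval_pow, eval_sub, eval_X, eval_C, zero_sub, neg_pow]
    have h1 : ((s : ℝ)) ^ s * (s : ℝ) ^ (N + 1 - s) = (s : ℝ) ^ (N + 1) := by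
      rw [← pow_add]; congr 1; omega
    have h2 : (-1 : ℝ) ^ (N + 1 - s) * (-1 : ℝ) ^ s = (-1 : ℝ) ^ (N + 1) := by
      rw [← pow_add]; congr 1; omega
    have hsq : ((-1 : ℝ) ^ s) ^ 2 = 1 := by
      rw [← pow_mul, mul_comm s 2, pow_mul]; norm_num
    have h3 : (-1 : ℝ) ^ (N + 1) * (-1 : ℝ) ^ s = (-1 : ℝ) ^ (N + 1 - s) := by
      rw [← h2, mul_assoc, ← sq, hsq, mul_one]
    push_cast
    calc ((N + 1).choose s : ℝ) * (s : ℝ) ^ s * ((-1 : ℝ) ^ (N + 1 - s) * (s : ℝ) ^ (N + 1 - s))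
        = (-1 : ℝ) ^ (N + 1 - s) * (((N + 1).choose s : ℝ) * ((s : ℝ) ^ s * (s : ℝ) ^ (N + 1 - s))) := by
          ring
      _ = (-1 : ℝ) ^ (N + 1 - s) * (((N + 1).choose s : ℝ) * (s : ℝ) ^ (N + 1)) := by rw [h1]
      _ = ((-1 : ℝ) ^ (N + 1) * (-1 : ℝ) ^ s) * (((N + 1).choose s : ℝ) * ((0 : ℝ) + s) ^ (N + 1)) := by
          rw [h3, zero_add]
      _ = (-1 : ℝ) ^ (N + 1) * ((-1 : ℝ) ^ s * ((N + 1).choose s : ℝ) * ((0 : ℝ) + s) ^ (N + 1)) := by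
          ring
  rw [sum_congr rfl hterm, ← Finset.mul_sum, ← fd, fd_eq (N + 1) (N + 1) le_rfl 0, if_pos rfl,
    ← mul_assoc, ← mul_pow]
  norm_num

lemma eval_zero_Q (N : ℕ) : eval 0 (Q (N + 1)) = ((N + 1).factorial : ℝ) := by
  unfold Q
  rw [eval_finset_sum]
  rw [Finset.sum_eq_single (N + 1)
    (fun m hm hne => by
      have : 0 < N + 1 - m := by
        have := mem_range.mp hm; omega
      rw [eval_mul, eval_C, eval_pow, eval_X, zero_pow (by omega), mul_zero])
    (fun h => absurd (self_mem_range_succ (N + 1)) h)]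
  rw [Nat.sub_self, eval_mul, eval_C, eval_pow, eval_X, pow_zero, mul_one,
    Nat.descFactorial_self]

lemma P_eq_Q : ∀ N : ℕ, P N = Q N := by
  intro N
  induction N with
  | zero => simp [P, Q]
  | succ N ih =>
    have hd : derivative (P (N + 1) - Q (N + 1)) = 0 := by
      rw [derivative_sub, derivative_P, derivative_Q, ih, sub_self]
    have hc := Polynomial.eq_C_of_derivative_eq_zero hd
    have h0 : (P (N + 1) - Q (N + 1)).coeff 0 = 0 := by
      rw [Polynomial.coeff_zero_eq_eval_zero, eval_sub, eval_zero_P, eval_zero_Q, sub_self]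
    have := hc.trans (by rw [h0, map_zero])
    linear_combination this

/-- The key Abel-type identity, evaluated form. -/
lemma key (N : ℕ) (y : ℝ) :
    ∑ s ∈ range (N + 1), ((N.choose s * s ^ s : ℕ) : ℝ) * (y - s) ^ (N - s)
      = ∑ m ∈ range (N + 1), ((N.descFactorial m : ℕ) : ℝ) * y ^ (N - m) := by
  have h := congrArg (eval y) (P_eq_Q N)
  unfold P Q at h
  rw [eval_finset_sum, eval_finset_sum] at h
  simpa [eval_mul, eval_pow, eval_sub] using h

/-- Divided form of the key identity. -/
lemma keyD (N : ℕ) (y : ℝ) :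
    ∑ s ∈ range (N + 1), (s : ℝ) ^ s * (y - s) ^ (N - s)
        / ((s.factorial : ℝ) * ((N - s).factorial : ℝ))
      = ∑ m ∈ range (N + 1), y ^ m / (m.factorial : ℝ) := by
  have hN : ((N.factorial : ℕ) : ℝ) ≠ 0 := Nat.cast_ne_zero.mpr N.factorial_ne_zero
  apply mul_left_cancel₀ hN
  rw [Finset.mul_sum, Finset.mul_sum]
  have hL : ∀ s ∈ range (N + 1),
      ((N.factorial : ℕ) : ℝ) * ((s : ℝ) ^ s * (y - s) ^ (N - s)
          / ((s.factorial : ℝ) * ((N - s).factorial : ℝ)))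
        = ((N.choose s * s ^ s : ℕ) : ℝ) * (y - s) ^ (N - s) := by
    intro s hs
    have hs' : s ≤ N := by simpa [Nat.lt_succ_iff] using hs
    have hfac : (N.choose s) * s.factorial * (N - s).factorial = N.factorial :=
      Nat.choose_mul_factorial_mul_factorial hs'
    have h1 : ((N.factorial : ℕ) : ℝ)
        = (N.choose s : ℝ) * (s.factorial : ℝ) * ((N - s).factorial : ℝ) := by
      exact_mod_cast hfac.symm
    have h2 : ((s.factorial : ℕ) : ℝ) ≠ 0 := Nat.cast_ne_zero.mpr s.factorial_ne_zero
    have h3 : (((N - s).factorial : ℕ) : ℝ) ≠ 0 := Nat.cast_ne_zero.mpr (N - s).factorial_ne_zero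
    rw [h1]
    push_cast
    field_simp
  rw [sum_congr rfl hL, key]
  rw [← sum_range_reflect (fun m => ((N.descFactorial m : ℕ) : ℝ) * y ^ (N - m)) (N + 1)]
  apply sum_congr rfl
  intro j hj
  have hj' : j ≤ N := by simpa [Nat.lt_succ_iff] using hj
  have e1 : N + 1 - 1 - j = N - j := by omega
  have e2 : N - (N - j) = j := by omega
  rw [e1, e2]
  have hfac : N.descFactorial (N - j) * j.factorial = N.factorial := by
    have h4 : N.descFactorial (N - j) = (N - j).factorial * N.choose (N - j) :=
      Nat.descFactorial_eq_factorial_mul_choose N (N - j)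
    have h5 : N.choose (N - j) * (N - j).factorial * (N - (N - j)).factorial = N.factorial :=
      Nat.choose_mul_factorial_mul_factorial (by omega)
    rw [e2] at h5
    rw [h4, ← h5]; ring
  have h2 : ((j.factorial : ℕ) : ℝ) ≠ 0 := Nat.cast_ne_zero.mpr j.factorial_ne_zero
  have h1 : ((N.factorial : ℕ) : ℝ) = (N.descFactorial (N - j) : ℝ) * (j.factorial : ℝ) := by
    exact_mod_cast hfac.symm
  rw [h1]
  field_simp

lemma sum_antidiagonalTuple_succ {M : Type*} [AddCommMonoid M] (k n : ℕ)
    (f : (Fin (k + 1) → ℕ) → M) :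
    ∑ v ∈ Finset.Nat.antidiagonalTuple (k + 1) n, f v
      = ∑ s ∈ range (n + 1), ∑ w ∈ Finset.Nat.antidiagonalTuple k (n - s), f (Fin.cons s w) := by
  rw [Finset.sum_sigma' (range (n + 1)) (fun s => Finset.Nat.antidiagonalTuple k (n - s))
    (fun s w => f (Fin.cons s w))]
  apply Finset.sum_nbij' (i := fun v => (⟨v 0, Fin.tail v⟩ :
      Σ _s : ℕ, (Fin k → ℕ))) (j := fun p => Fin.cons p.1 p.2)
  · intro v hv
    have hv' : ∑ i, v i = n := Finset.Nat.mem_antidiagonalTuple.mp hv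
    rw [Fin.sum_univ_succ] at hv'
    rw [Finset.mem_sigma, mem_range, Finset.Nat.mem_antidiagonalTuple]
    constructor
    · show v 0 < n + 1
      omega
    · show ∑ i : Fin k, v i.succ = n - v 0
      omega
  · intro p hp
    rw [Finset.mem_sigma, mem_range, Finset.Nat.mem_antidiagonalTuple] at hp
    rw [Finset.Nat.mem_antidiagonalTuple, Fin.sum_univ_succ, Fin.cons_zero]
    simp only [Fin.cons_succ]
    rw [hp.2]
    omega
  · intro v _
    exact Fin.cons_self_tail v
  · intro p _
    simp [Fin.tail_cons]
  · intro v _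
    rw [Fin.cons_self_tail]

/-- Scaled regret sum. -/
noncomputable def Tsum (L n : ℕ) : ℝ :=
  ∑ v ∈ Finset.Nat.antidiagonalTuple L n, ∏ j, ((v j : ℝ) ^ (v j) / ((v j).factorial : ℝ))

lemma Tsum_one (n : ℕ) : Tsum 1 n = (n : ℝ) ^ n / (n.factorial : ℝ) := by
  rw [Tsum, Finset.Nat.antidiagonalTuple_one, Finset.sum_singleton]
  rw [Fin.prod_univ_one]
  simp

lemma Tsum_succ (L n : ℕ) :
    Tsum (L + 1) n = ∑ s ∈ range (n + 1), (s : ℝ) ^ s / (s.factorial : ℝ) * Tsum L (n - s) := by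
  rw [Tsum, sum_antidiagonalTuple_succ]
  apply sum_congr rfl
  intro s _
  rw [Tsum, Finset.mul_sum]
  apply sum_congr rfl
  intro w _
  rw [Fin.prod_univ_succ, Fin.cons_zero]
  simp only [Fin.cons_succ]

lemma hockey (M t : ℕ) : ∑ j ∈ range (t + 1), (M + j).choose j = (M + 1 + t).choose t := by
  have h := Nat.sum_range_add_choose t M
  have h2 : ∀ j ∈ range (t + 1), (M + j).choose j = (j + M).choose M := by
    intro j _
    rw [Nat.add_comm M j, Nat.choose_symm_add]
  rw [Finset.sum_congr rfl h2, h, show t + M + 1 = (M + 1) + t by omega,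
    Nat.choose_symm_add]

lemma Tsum_eq (M : ℕ) : ∀ n : ℕ, Tsum (M + 2) n
    = ∑ k ∈ range (n + 1), (((M + k).choose k : ℕ) : ℝ)
        * ((n : ℝ) ^ (n - k) / (((n - k).factorial : ℕ) : ℝ)) := by
  induction M with
  | zero =>
    intro n
    rw [show (0 : ℕ) + 2 = 1 + 1 from rfl, Tsum_succ]
    have hL : ∀ s ∈ range (n + 1),
        (s : ℝ) ^ s / (s.factorial : ℝ) * Tsum 1 (n - s)
          = (s : ℝ) ^ s * ((n : ℝ) - s) ^ (n - s)
              / ((s.factorial : ℝ) * ((n - s).factorial : ℝ)) := by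
      intro s hs
      have hs' : s ≤ n := by simpa [Nat.lt_succ_iff] using hs
      rw [Tsum_one, Nat.cast_sub hs']
      ring
    rw [sum_congr rfl hL, keyD n (n : ℝ),
      ← sum_range_reflect (fun m => (n : ℝ) ^ m / (m.factorial : ℝ)) (n + 1)]
    apply sum_congr rfl
    intro k _
    have e1 : n + 1 - 1 - k = n - k := by omega
    simp only [e1, Nat.zero_add, Nat.choose_self, Nat.cast_one, one_mul]
  | succ M ih =>
    intro n
    rw [show M + 1 + 2 = (M + 2) + 1 from rfl, Tsum_succ]
    have h1 : ∀ s ∈ range (n + 1),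
        (s : ℝ) ^ s / (s.factorial : ℝ) * Tsum (M + 2) (n - s)
          = ∑ j ∈ range (n - s + 1), (((M + j).choose j : ℕ) : ℝ)
              * ((s : ℝ) ^ s * ((n : ℝ) - s) ^ (n - s - j)
                  / ((s.factorial : ℝ) * ((n - s - j).factorial : ℝ))) := by
      intro s hs
      have hs' : s ≤ n := by simpa [Nat.lt_succ_iff] using hs
      rw [ih (n - s), Finset.mul_sum]
      apply sum_congr rfl
      intro j hj
      rw [Nat.cast_sub hs']
      ring
    rw [sum_congr rfl h1]
    rw [Finset.sum_comm' (s := range (n + 1)) (t := fun s => range (n - s + 1))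
      (t' := range (n + 1)) (s' := fun j => range (n - j + 1))
      (by intro a b; simp only [mem_range]; omega)]
    have h2 : ∀ j ∈ range (n + 1),
        ∑ s ∈ range (n - j + 1), (((M + j).choose j : ℕ) : ℝ)
            * ((s : ℝ) ^ s * ((n : ℝ) - s) ^ (n - s - j)
                / ((s.factorial : ℝ) * ((n - s - j).factorial : ℝ)))
          = ∑ m ∈ range (n - j + 1),
              (((M + j).choose j : ℕ) : ℝ) * ((n : ℝ) ^ m / (m.factorial : ℝ)) := by
      intro j _
      rw [← Finset.mul_sum, ← Finset.mul_sum, ← keyD (n - j) (n : ℝ)]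
      congr 1
      apply sum_congr rfl
      intro s _
      have e : n - s - j = n - j - s := by omega
      rw [e]
    rw [sum_congr rfl h2]
    rw [Finset.sum_comm' (s := range (n + 1)) (t := fun j => range (n - j + 1))
      (t' := range (n + 1)) (s' := fun m => range (n - m + 1))
      (by intro a b; simp only [mem_range]; omega)]
    have h3 : ∀ m ∈ range (n + 1),
        ∑ j ∈ range (n - m + 1), (((M + j).choose j : ℕ) : ℝ) * ((n : ℝ) ^ m / (m.factorial : ℝ))
          = (((M + 1 + (n - m)).choose (n - m) : ℕ) : ℝ) * ((n : ℝ) ^ m / (m.factorial : ℝ)) := by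
      intro m _
      rw [← Finset.sum_mul]
      congr 1
      exact_mod_cast congrArg (fun t : ℕ => (t : ℝ)) (hockey M (n - m))
    rw [sum_congr rfl h3,
      ← sum_range_reflect (fun k => (((M + 1 + k).choose k : ℕ) : ℝ)
          * ((n : ℝ) ^ (n - k) / (((n - k).factorial : ℕ) : ℝ))) (n + 1)]
    apply sum_congr rfl
    intro m hm
    have hm' : m ≤ n := by simpa [Nat.lt_succ_iff] using hm
    have e1 : n + 1 - 1 - m = n - m := by omega
    have e2 : n - (n - m) = m := by omega
    simp only [e1, e2]

theorem regret_eq (M n : ℕ) (hn : 1 ≤ n) :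
    regret (M + 2) n = ∑ k ∈ range (n + 1),
      ((n.descFactorial k : ℝ) * ((M + 1).ascFactorial k : ℝ))
        / ((n : ℝ) ^ k * (k.factorial : ℝ)) := by
  have hn0 : ((n : ℝ)) ≠ 0 := Nat.cast_ne_zero.mpr (by omega)
  have h1 : regret (M + 2) n = (n.factorial : ℝ) / (n : ℝ) ^ n * Tsum (M + 2) n := by
    rw [regret, Tsum, Finset.mul_sum]
    apply sum_congr rfl
    intro v hv
    have hsum : ∑ j, v j = n := Finset.Nat.mem_antidiagonalTuple.mp hv
    have h2 : ∏ j, ((v j : ℝ) / n) ^ (v j)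
        = (∏ j, (v j : ℝ) ^ (v j)) / (n : ℝ) ^ n := by
      conv_rhs => rw [← hsum]
      rw [← Finset.prod_pow_eq_pow_sum, ← Finset.prod_div_distrib]
      apply Finset.prod_congr rfl
      intro j _
      rw [div_pow, hsum]
    rw [h2, Finset.prod_div_distrib]
    ring
  rw [h1, Tsum_eq, Finset.mul_sum]
  apply sum_congr rfl
  intro k hk
  have hk' : k ≤ n := by simpa [Nat.lt_succ_iff] using hk
  have hA : (((M + 1).ascFactorial k : ℕ) : ℝ)
      = (k.factorial : ℝ) * (((M + k).choose k : ℕ) : ℝ) := by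
    exact_mod_cast congrArg (fun t : ℕ => (t : ℝ)) (Nat.ascFactorial_eq_factorial_mul_choose M k)
  have hfacnat : n.descFactorial k * (n - k).factorial = n.factorial := by
    have h4 : n.descFactorial k = k.factorial * n.choose k :=
      Nat.descFactorial_eq_factorial_mul_choose n k
    have h5 : n.choose k * k.factorial * (n - k).factorial = n.factorial :=
      Nat.choose_mul_factorial_mul_factorial hk'
    rw [h4, ← h5]; ring
  have hfac : (n.factorial : ℝ) = (n.descFactorial k : ℝ) * ((n - k).factorial : ℝ) := by
    exact_mod_cast hfacnat.symm
  have hpow : ((n : ℝ)) ^ n = (n : ℝ) ^ k * (n : ℝ) ^ (n - k) := by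
    rw [← pow_add]; congr 1; omega
  rw [hA, hfac, hpow]
  have h6 : ((k.factorial : ℕ) : ℝ) ≠ 0 := Nat.cast_ne_zero.mpr k.factorial_ne_zero
  have h7 : (((n - k).factorial : ℕ) : ℝ) ≠ 0 := Nat.cast_ne_zero.mpr (n - k).factorial_ne_zero
  have h8 : ((n : ℝ)) ^ k ≠ 0 := pow_ne_zero _ hn0
  have h9 : ((n : ℝ)) ^ (n - k) ≠ 0 := pow_ne_zero _ hn0
  field_simp

end MononenAux

/-- Mononen–Myllymäki representation of the multinomial NML regret. -/
theorem regret_eq_sum_fallingRising (L n : ℕ) (hL : 2 ≤ L) (hn : 1 ≤ n) :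
    regret L n = ∑ k ∈ Finset.range (n + 1),
      ((n.descFactorial k : ℝ) * ((L - 1).ascFactorial k : ℝ)) /
        ((n : ℝ) ^ k * (k.factorial : ℝ)) := by
  obtain ⟨M, rfl⟩ : ∃ M, L = M + 2 := ⟨L - 2, by omega⟩
  have : M + 2 - 1 = M + 1 := rfl
  rw [this]
  exact MononenAux.regret_eq M n hn
end

section
/- For k ≥ 2, the function n ↦ log C_k^n is subadditive on the nonnegative integers: log C_k^{m+n} ≤ log C_k^m + log C_k^n for all m, n ≥ 0. -/
section Aux
open Finset MvPolynomial

lemma prodX (k : ℕ) (u : Fin k → ℕ) :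
    (∏ i, (X i : MvPolynomial (Fin k) ℕ) ^ u i) =
      monomial (Finsupp.equivFunOnFinite.symm u) 1 := by
  rw [← prod_X_pow_eq_monomial]
  refine (Finset.prod_subset (Finset.subset_univ _) ?_).symm
  intro i _ hi
  simp only [Finsupp.mem_support_iff, not_not, Finsupp.coe_equivFunOnFinite_symm] at hi
  simp [Finsupp.coe_equivFunOnFinite_symm, hi]

lemma expand (k n : ℕ) :
    ((∑ i, (X i : MvPolynomial (Fin k) ℕ)) ^ n) =
      ∑ u ∈ Finset.Nat.antidiagonalTuple k n,
        (Nat.multinomial univ u) • monomial (Finsupp.equivFunOnFinite.symm u) (1:ℕ) := by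
  rw [Finset.sum_pow_eq_sum_piAntidiag, Finset.piAntidiag_univ_fin_eq_antidiagonalTuple]
  refine Finset.sum_congr rfl fun u _ => ?_
  rw [prodX, nsmul_eq_mul]

lemma vandermonde (k m n : ℕ) (w : Fin k → ℕ) (hw : ∑ i, w i = m + n) :
    Nat.multinomial univ w =
      ∑ p ∈ (Finset.Nat.antidiagonalTuple k m ×ˢ Finset.Nat.antidiagonalTuple k n).filter
          (fun p => p.1 + p.2 = w),
        Nat.multinomial univ p.1 * Nat.multinomial univ p.2 := by
  have key : ((∑ i, (X i : MvPolynomial (Fin k) ℕ)) ^ (m + n)) =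
      ((∑ i, (X i : MvPolynomial (Fin k) ℕ)) ^ m) * ((∑ i, (X i : MvPolynomial (Fin k) ℕ)) ^ n) :=
    pow_add _ _ _
  rw [expand, expand, expand, Finset.sum_mul_sum] at key
  have hco := congrArg (coeff (Finsupp.equivFunOnFinite.symm w)) key
  rw [coeff_sum] at hco
  simp only [Finset.sum_product', coeff_sum] at hco
  rw [Finset.sum_eq_single w] at hco
  · simp only [coeff_smul, coeff_monomial, if_pos rfl, smul_eq_mul, mul_one, eq_self_iff_true, if_true] at hco
    rw [hco, Finset.sum_filter, Finset.sum_product]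
    refine Finset.sum_congr rfl fun u hu => Finset.sum_congr rfl fun v hv => ?_
    rw [smul_mul_smul_comm, monomial_mul, mul_one, coeff_smul, coeff_monomial, smul_eq_mul]
    have : (Finsupp.equivFunOnFinite.symm u + Finsupp.equivFunOnFinite.symm v
        = Finsupp.equivFunOnFinite.symm w) ↔ u + v = w := by
      rw [← Equiv.apply_eq_iff_eq Finsupp.equivFunOnFinite.symm]
      constructor
      · intro h; rw [← h]; ext i; simp
      · intro h; rw [← h]; ext i; simp
    split_ifs with h1 h2 h2
    · simp
    · exact absurd (this.mp h1) h2
    · exact absurd (this.mpr h2) h1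
    · simp
  · intro b hb hbw
    rw [coeff_smul, coeff_monomial, if_neg, smul_eq_mul, mul_zero]
    exact fun h => hbw (Finsupp.equivFunOnFinite.symm.injective h)
  · intro h
    exact absurd (Finset.Nat.mem_antidiagonalTuple.mpr hw) h

lemma ml_bound {k m : ℕ} (hm : 0 < m) (u : Fin k → ℕ) (hu : ∑ j, u j = m)
    (p : Fin k → ℝ) (hp : ∀ j, 0 ≤ p j) (hps : ∑ j, p j = 1) :
    ∏ j, p j ^ u j ≤ ∏ j, ((u j : ℝ) / m) ^ u j := by
  classical
  set s : Finset (Fin k) := univ.filter (fun j => u j ≠ 0) with hs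
  have hsub : s ⊆ univ := subset_univ _
  have hzero : ∀ j ∈ univ, j ∉ s → p j ^ u j = 1 := by
    intro j _ hj
    simp only [hs, mem_filter, mem_univ, true_and, not_not] at hj
    simp [hj]
  have hzero' : ∀ j ∈ univ, j ∉ s → ((u j : ℝ) / m) ^ u j = 1 := by
    intro j _ hj
    simp only [hs, mem_filter, mem_univ, true_and, not_not] at hj
    simp [hj]
  rw [← Finset.prod_subset hsub hzero, ← Finset.prod_subset hsub hzero']
  have hus : ∑ j ∈ s, (u j : ℝ) = m := by
    rw [← Nat.cast_sum]
    norm_cast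
    rw [← hu]
    refine Finset.sum_subset hsub fun j _ hj => ?_
    simpa [hs, mem_filter, mem_univ, true_and, not_not] using hj
  set w : Fin k → ℝ := fun j => (u j : ℝ) / m
  set z : Fin k → ℝ := fun j => p j * m / (u j : ℝ)
  have hm' : (0:ℝ) < m := by exact_mod_cast hm
  have hwnn : ∀ j ∈ s, 0 ≤ w j := fun j _ => div_nonneg (Nat.cast_nonneg _) hm'.le
  have hws : ∑ j ∈ s, w j = 1 := by
    rw [← Finset.sum_div, hus, div_self hm'.ne']
  have hznn : ∀ j ∈ s, 0 ≤ z j := fun j _ =>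
    div_nonneg (mul_nonneg (hp j) hm'.le) (Nat.cast_nonneg _)
  have hgm := Real.geom_mean_le_arith_mean_weighted s w z hwnn hws hznn
  have hrhs : ∑ j ∈ s, w j * z j ≤ 1 := by
    have : ∀ j ∈ s, w j * z j = p j := by
      intro j hj
      simp only [hs, mem_filter, mem_univ, true_and] at hj
      have huj : (0:ℝ) < u j := by exact_mod_cast Nat.pos_of_ne_zero hj
      simp only [w, z]
      field_simp
    rw [Finset.sum_congr rfl this, ← hps]
    exact Finset.sum_le_sum_of_subset_of_nonneg hsub (fun j _ _ => hp j)
  have hgm1 : ∏ j ∈ s, z j ^ (w j) ≤ 1 := le_trans hgm hrhs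
  -- raise to the m-th power
  have hprodnn : 0 ≤ ∏ j ∈ s, z j ^ (w j) :=
    Finset.prod_nonneg fun j hj => Real.rpow_nonneg (hznn j hj) _
  have hpow : (∏ j ∈ s, z j ^ (w j)) ^ m ≤ 1 := pow_le_one₀ hprodnn hgm1
  have hpow2 : ∏ j ∈ s, z j ^ (u j) ≤ 1 := by
    refine le_trans (le_of_eq ?_) hpow
    rw [← Finset.prod_pow]
    refine Finset.prod_congr rfl fun j hj => ?_
    rw [← Real.rpow_natCast (z j ^ (w j)) m, ← Real.rpow_mul (hznn j hj),
      ← Real.rpow_natCast (z j) (u j)]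
    congr 1
    simp only [hs, mem_filter, mem_univ, true_and] at hj
    simp only [w]
    field_simp
  -- conclude
  calc ∏ j ∈ s, p j ^ u j = (∏ j ∈ s, z j ^ u j) * ∏ j ∈ s, ((u j : ℝ)/m) ^ u j := by
        rw [← Finset.prod_mul_distrib]
        refine Finset.prod_congr rfl fun j hj => ?_
        rw [← mul_pow]
        congr 1
        simp only [hs, mem_filter, mem_univ, true_and] at hj
        have huj : (0:ℝ) < u j := by exact_mod_cast Nat.pos_of_ne_zero hj
        simp only [z]
        field_simp
    _ ≤ 1 * ∏ j ∈ s, ((u j : ℝ)/m) ^ u j := by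
        refine mul_le_mul_of_nonneg_right hpow2 ?_
        exact Finset.prod_nonneg fun j _ => pow_nonneg (div_nonneg (Nat.cast_nonneg _) hm'.le) _
    _ = ∏ j ∈ s, ((u j : ℝ)/m) ^ u j := one_mul _

lemma regret_aux_ge_one {k : ℕ} (hk : 1 ≤ k) (n : ℕ) :
    (1:ℝ) ≤ ∑ v ∈ Finset.Nat.antidiagonalTuple k n,
      ((n.factorial : ℝ) / ∏ j, ((v j).factorial : ℝ)) * ∏ j, ((v j : ℝ) / n) ^ (v j) := by
  have hk0 : k ≠ 0 := by omega
  haveI : NeZero k := ⟨hk0⟩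
  set e : Fin k → ℕ := fun j => if j = 0 then n else 0 with he
  have hmem : e ∈ Finset.Nat.antidiagonalTuple k n := by
    rw [Finset.Nat.mem_antidiagonalTuple, he]
    simp
  have h1 : (∏ j, ((e j).factorial : ℝ)) = n.factorial := by
    simp only [he, apply_ite, Nat.factorial_zero, Nat.cast_ite, Nat.cast_one]
    simp [Finset.prod_ite_eq']
  have h2 : (∏ j, ((e j : ℝ) / n) ^ (e j)) = 1 := by
    have : ∀ j, ((e j : ℝ) / n) ^ (e j) = 1 := by
      intro j
      rw [he]
      by_cases hj : j = 0
      · simp only [hj, if_pos rfl, if_true, eq_self_iff_true]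
        rcases Nat.eq_zero_or_pos n with h | h
        · simp [h]
        · have : ((n:ℝ)) / n = 1 := div_self (by exact_mod_cast h.ne')
          rw [this, one_pow]
      · simp [hj]
    exact Finset.prod_eq_one fun j _ => this j
  have hval : ((n.factorial : ℝ) / ∏ j, ((e j).factorial : ℝ)) * ∏ j, ((e j : ℝ) / n) ^ (e j)
      = 1 := by
    rw [h1, h2, mul_one, div_self (by exact_mod_cast n.factorial_ne_zero)]
  calc (1:ℝ) = _ := hval.symm
    _ ≤ _ := by
      refine Finset.single_le_sum (f := fun v =>
        ((n.factorial : ℝ) / ∏ j, ((v j).factorial : ℝ)) * ∏ j, ((v j : ℝ) / n) ^ (v j))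
        (fun v _ => ?_) hmem
      refine mul_nonneg (div_nonneg (Nat.cast_nonneg _) ?_) ?_
      · exact Finset.prod_nonneg fun j _ => Nat.cast_nonneg _
      · exact Finset.prod_nonneg fun j _ =>
          pow_nonneg (div_nonneg (Nat.cast_nonneg _) (Nat.cast_nonneg _)) _


lemma coeff_eq {k n : ℕ} (v : Fin k → ℕ) (hv : ∑ j, v j = n) :
    ((n.factorial : ℝ) / ∏ j, ((v j).factorial : ℝ)) = (Nat.multinomial univ v : ℝ) := by
  have hspec := Nat.multinomial_spec univ v
  rw [hv] at hspec
  have hne : (∏ j, ((v j).factorial : ℝ)) ≠ 0 :=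
    Finset.prod_ne_zero_iff.mpr fun j _ => Nat.cast_ne_zero.mpr (Nat.factorial_ne_zero _)
  rw [div_eq_iff hne, ← hspec]
  push_cast
  ring

lemma regret_eq (k n : ℕ) : regret k n = ∑ v ∈ Finset.Nat.antidiagonalTuple k n,
    (Nat.multinomial univ v : ℝ) * ∏ j, ((v j : ℝ) / n) ^ (v j) := by
  refine Finset.sum_congr rfl fun v hv => ?_
  rw [coeff_eq v (Finset.Nat.mem_antidiagonalTuple.mp hv)]

lemma L_nonneg {k n : ℕ} (v : Fin k → ℕ) : 0 ≤ ∏ j, ((v j : ℝ) / n) ^ (v j) :=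
  Finset.prod_nonneg fun j _ => pow_nonneg (div_nonneg (Nat.cast_nonneg _) (Nat.cast_nonneg _)) _

lemma termwise {k m n : ℕ} (hm : 0 < m) (hn : 0 < n) (u v : Fin k → ℕ)
    (hu : ∑ j, u j = m) (hv : ∑ j, v j = n) :
    ∏ j, (((u j + v j : ℕ) : ℝ) / (m + n)) ^ (u j + v j) ≤
      (∏ j, ((u j : ℝ) / m) ^ (u j)) * ∏ j, ((v j : ℝ) / n) ^ (v j) := by
  have hmn : (0:ℝ) < ((m:ℝ) + n) := by positivity
  set p : Fin k → ℝ := fun j => ((u j + v j : ℕ) : ℝ) / ((m:ℝ) + n) with hp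
  have hpnn : ∀ j, 0 ≤ p j := fun j => div_nonneg (Nat.cast_nonneg _) hmn.le
  have hps : ∑ j, p j = 1 := by
    rw [hp, ← Finset.sum_div]
    rw [div_eq_one_iff_eq hmn.ne']
    push_cast
    have h' : (∑ x, (u x + v x) : ℕ) = m + n := by rw [Finset.sum_add_distrib, hu, hv]
    exact_mod_cast h'
  have h1 := ml_bound hm u hu p hpnn hps
  have h2 := ml_bound hn v hv p hpnn hps
  calc ∏ j, (((u j + v j : ℕ) : ℝ) / (m + n)) ^ (u j + v j)
      = (∏ j, p j ^ u j) * ∏ j, p j ^ v j := by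
        rw [← Finset.prod_mul_distrib]
        refine Finset.prod_congr rfl fun j _ => ?_
        rw [← pow_add]
    _ ≤ (∏ j, ((u j : ℝ) / m) ^ (u j)) * ∏ j, ((v j : ℝ) / n) ^ (v j) := by
        refine mul_le_mul h1 h2 (Finset.prod_nonneg fun j _ => pow_nonneg (hpnn j) _) ?_
        exact Finset.prod_nonneg fun j _ =>
          pow_nonneg (div_nonneg (Nat.cast_nonneg _) (Nat.cast_nonneg _)) _

lemma main_ineq {k : ℕ} (m n : ℕ) (hm : 0 < m) (hn : 0 < n) :
    regret k (m + n) ≤ regret k m * regret k n := by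
  rw [regret_eq, regret_eq, regret_eq]
  have step1 : ∑ w ∈ Finset.Nat.antidiagonalTuple k (m + n),
      (Nat.multinomial univ w : ℝ) * ∏ j, ((w j : ℝ) / ((m + n : ℕ) : ℝ)) ^ (w j) ≤
      ∑ w ∈ Finset.Nat.antidiagonalTuple k (m + n),
        ∑ p ∈ (Finset.Nat.antidiagonalTuple k m ×ˢ Finset.Nat.antidiagonalTuple k n).filter
            (fun p => p.1 + p.2 = w),
          ((Nat.multinomial univ p.1 * Nat.multinomial univ p.2 : ℕ) : ℝ) *
            ((∏ j, ((p.1 j : ℝ) / m) ^ (p.1 j)) * ∏ j, ((p.2 j : ℝ) / n) ^ (p.2 j)) := by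
    refine Finset.sum_le_sum fun w hw => ?_
    rw [vandermonde k m n w (Finset.Nat.mem_antidiagonalTuple.mp hw), Nat.cast_sum,
      Finset.sum_mul]
    refine Finset.sum_le_sum fun p hp => ?_
    obtain ⟨hpmem, hpw⟩ := Finset.mem_filter.mp hp
    obtain ⟨h1, h2⟩ := Finset.mem_product.mp hpmem
    subst hpw
    refine mul_le_mul_of_nonneg_left ?_ (Nat.cast_nonneg _)
    have := termwise hm hn p.1 p.2 (Finset.Nat.mem_antidiagonalTuple.mp h1)
      (Finset.Nat.mem_antidiagonalTuple.mp h2)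
    simpa [Pi.add_apply, Nat.cast_add] using this
  refine le_trans step1 (le_of_eq ?_)
  have hmap : ∀ p ∈ (Finset.Nat.antidiagonalTuple k m ×ˢ Finset.Nat.antidiagonalTuple k n),
      p.1 + p.2 ∈ Finset.Nat.antidiagonalTuple k (m + n) := by
    intro p hp
    obtain ⟨h1, h2⟩ := Finset.mem_product.mp hp
    rw [Finset.Nat.mem_antidiagonalTuple]
    rw [Finset.Nat.mem_antidiagonalTuple] at h1 h2
    simp only [Pi.add_apply]
    rw [Finset.sum_add_distrib, h1, h2]
  have hfib := Finset.sum_fiberwise_of_maps_to (g := fun p : (Fin k → ℕ) × (Fin k → ℕ) => p.1 + p.2) hmap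
    (fun p : (Fin k → ℕ) × (Fin k → ℕ) => ((Nat.multinomial univ p.1 * Nat.multinomial univ p.2 : ℕ) : ℝ) *
      ((∏ j, ((p.1 j : ℝ) / m) ^ (p.1 j)) * ∏ j, ((p.2 j : ℝ) / n) ^ (p.2 j)))
  rw [hfib, Finset.sum_mul_sum, Finset.sum_product]
  refine Finset.sum_congr rfl fun u _ => Finset.sum_congr rfl fun v _ => ?_
  push_cast
  ring

lemma regret_ge_one {k : ℕ} (hk : 1 ≤ k) (n : ℕ) : (1:ℝ) ≤ regret k n :=
  regret_aux_ge_one hk n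

lemma regret_zero {k : ℕ} (hk : 1 ≤ k) : regret k 0 = 1 := by
  unfold regret
  rw [Finset.Nat.antidiagonalTuple_zero_right, Finset.sum_singleton]
  simp

end Aux

/-- Subadditivity of the log NML regret in the sample size. -/
theorem regret_log_subadditive (k : ℕ) (hk : 2 ≤ k) :
    ∀ m n : ℕ, Real.log (regret k (m + n)) ≤
      Real.log (regret k m) + Real.log (regret k n) := by
  intro m n
  have hk1 : 1 ≤ k := by omega
  rcases Nat.eq_zero_or_pos m with hm | hm
  · subst hm
    rw [regret_zero hk1, Real.log_one, zero_add, zero_add]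
  rcases Nat.eq_zero_or_pos n with hn | hn
  · subst hn
    rw [regret_zero hk1, Real.log_one, add_zero, add_zero]
  have h1 := regret_ge_one hk1 m
  have h2 := regret_ge_one hk1 n
  have hmain := main_ineq (k := k) m n hm hn
  calc Real.log (regret k (m + n)) ≤ Real.log (regret k m * regret k n) := by
        refine Real.log_le_log ?_ hmain
        refine lt_of_lt_of_le one_pos (regret_ge_one hk1 _)
    _ = Real.log (regret k m) + Real.log (regret k n) :=
        Real.log_mul (by linarith) (by linarith)
end

section
/- Let S_q(X|Z) := n·Ĥ(X|Z) + log(C_{|𝒳|·|𝒵|}^n / C_{|𝒵|}^n) be the qNML conditional stochastic complexity. Then SCI_q is symmetric: S_q(X|Z) − S_q(X|Z,Y) = S_q(Y|Z) − S_q(Y|Z,X), where Ĥ is the empirical conditional entropy computed from a sample of size n. -/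
/-- fNML regret `R_f(X | Z)` of a variable with domain size `k` given the observed
conditioning data `Z` on `n` samples: `∑_z log C_k^{n_z}`. -/
noncomputable def Rf (k : ℕ) {n : ℕ} {α : Type*} [Fintype α] [DecidableEq α]
    (Z : Fin n → α) : ℝ :=
  ∑ z : α, Real.log (regret k (Finset.univ.filter (fun i => Z i = z)).card)

/-- Empirical (plug-in) Shannon entropy of the sample `W`, in nats
(with the convention `0 · log 0 = 0`). -/
noncomputable def empEnt {n : ℕ} {α : Type*} [Fintype α] [DecidableEq α]
    (W : Fin n → α) : ℝ :=
  -∑ a : α, (((Finset.univ.filter (fun i => W i = a)).card : ℝ) / n) *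
      Real.log (((Finset.univ.filter (fun i => W i = a)).card : ℝ) / n)

/-- Empirical conditional entropy `Ĥ(X | Z) = Ĥ(X,Z) - Ĥ(Z)`. -/
noncomputable def empCondEnt {n : ℕ} {α β : Type*} [Fintype α] [DecidableEq α]
    [Fintype β] [DecidableEq β] (X : Fin n → α) (Z : Fin n → β) : ℝ :=
  empEnt (fun i => (X i, Z i)) - empEnt Z

/-- qNML conditional stochastic complexity `S_q` given domain sizes `kX` and `kZ`. -/
noncomputable def Sq {n : ℕ} {α β : Type*} [Fintype α] [DecidableEq α]
    [Fintype β] [DecidableEq β] (X : Fin n → α) (Z : Fin n → β)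
    (kX kZ : ℕ) : ℝ :=
  n * empCondEnt X Z + Real.log (regret (kX * kZ) n / regret kZ n)


lemma regret_zero_right (k : ℕ) : regret k 0 = 1 := by
  simp [regret, Finset.Nat.antidiagonalTuple_zero_right]

lemma one_le_regret {k : ℕ} (hk : 0 < k) (n : ℕ) : 1 ≤ regret k n := by
  let v : Fin k → ℕ := Pi.single ⟨0, hk⟩ n
  have hmem : v ∈ Finset.Nat.antidiagonalTuple k n := by
    simp [v, Finset.Nat.mem_antidiagonalTuple]
  have hterm : ((n.factorial : ℝ) / ∏ j, ((v j).factorial : ℝ)) *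
      ∏ j, ((v j : ℝ) / n) ^ (v j) = 1 := by
    rw [Fintype.prod_eq_single ⟨0, hk⟩ (fun j hj => by simp [v, hj]),
      Fintype.prod_eq_single ⟨0, hk⟩ (fun j hj => by simp [v, hj])]
    rw [show v ⟨0, hk⟩ = n from Pi.single_eq_same _ _]
    rcases n.eq_zero_or_pos with rfl | hn
    · simp
    · have hn' : (n : ℝ) ≠ 0 := Nat.cast_ne_zero.mpr hn.ne'
      simp [div_self hn', (Nat.factorial_pos n).ne']
  rw [← hterm, regret]
  exact Finset.single_le_sum (f := fun w : Fin k → ℕ =>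
    ((n.factorial : ℝ) / ∏ j, ((w j).factorial : ℝ)) * ∏ j, ((w j : ℝ) / n) ^ (w j))
    (fun w _ => by positivity) hmem

lemma empEnt_comp_injective {n : ℕ} {α β : Type*} [Fintype α] [DecidableEq α]
    [Fintype β] [DecidableEq β] {e : α → β} (he : Function.Injective e) (W : Fin n → α) :
    empEnt (fun i => e (W i)) = empEnt W := by
  unfold empEnt
  congr 1
  refine (Fintype.sum_of_injective e he _ _ (fun b hb => ?_) (fun a => ?_)).symm
  · have : Finset.univ.filter (fun i => e (W i) = b) = ∅ :=
      Finset.filter_eq_empty_iff.mpr fun i _ h => hb ⟨W i, h⟩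
    simp [this]
  · simp only [he.eq_iff]

lemma empEnt_swap {n : ℕ} {α β : Type*} [Fintype α] [DecidableEq α]
    [Fintype β] [DecidableEq β] (X : Fin n → α) (Y : Fin n → β) :
    empEnt (fun i => (Y i, X i)) = empEnt (fun i => (X i, Y i)) :=
  empEnt_comp_injective (e := Prod.swap) Prod.swap_injective (fun i => (X i, Y i))

/-- Both sides equal `Ĥ(X,Z) + Ĥ(Y,Z) - Ĥ(Z) - Ĥ(X,Y,Z)`. -/
lemma empCondEnt_sub_empCondEnt_comm {n : ℕ} {α β γ : Type*} [Fintype α] [DecidableEq α]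
    [Fintype β] [DecidableEq β] [Fintype γ] [DecidableEq γ]
    (X : Fin n → α) (Y : Fin n → β) (Z : Fin n → γ) :
    empCondEnt X Z - empCondEnt X (fun i => (Z i, Y i)) =
      empCondEnt Y Z - empCondEnt Y (fun i => (Z i, X i)) := by
  have hXYZ : empEnt (fun i => (X i, (Z i, Y i))) = empEnt (fun i => (Y i, (Z i, X i))) :=
    empEnt_comp_injective (e := fun p : β × (γ × α) => (p.2.2, (p.2.1, p.1)))
      (fun ⟨_, _, _⟩ ⟨_, _, _⟩ h => by simpa [and_comm, and_left_comm] using h)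
      (fun i => (Y i, (Z i, X i)))
  simp only [empCondEnt, hXYZ, empEnt_swap Z]
  ring

lemma log_div_sub_log_div_comm {a b c d : ℝ} (ha : a ≠ 0) (hb : b ≠ 0) (hc : c ≠ 0)
    (hd : d ≠ 0) : Real.log (a / b) - Real.log (d / c) = Real.log (c / b) - Real.log (d / a) := by
  rw [Real.log_div ha hb, Real.log_div hd hc, Real.log_div hc hb, Real.log_div hd ha]
  ring

lemma log_regret_div_sub_comm (n : ℕ) {kX kY kZ : ℕ} (hX : 0 < kX) (hY : 0 < kY) (hZ : 0 < kZ) :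
    Real.log (regret (kX * kZ) n / regret kZ n) -
        Real.log (regret (kX * (kZ * kY)) n / regret (kZ * kY) n) =
      Real.log (regret (kY * kZ) n / regret kZ n) -
        Real.log (regret (kY * (kZ * kX)) n / regret (kZ * kX) n) := by
  have hne : ∀ k, 0 < k → regret k n ≠ 0 := fun k hk =>
    (zero_lt_one.trans_le (one_le_regret hk n)).ne'
  rw [show kY * (kZ * kX) = kX * (kZ * kY) by ring, mul_comm kZ kX, mul_comm kZ kY]
  exact log_div_sub_log_div_comm (hne _ (by positivity)) (hne _ hZ) (hne _ (by positivity))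
    (hne _ (by positivity))

/-- Symmetry of `SCI_q`: `S_q(X|Z) − S_q(X|Z,Y) = S_q(Y|Z) − S_q(Y|Z,X)`. -/
theorem SCIq_symmetric {n : ℕ} {𝒳 𝒴 𝒵 : Type*}
    [Fintype 𝒳] [DecidableEq 𝒳] [Fintype 𝒴] [DecidableEq 𝒴]
    [Fintype 𝒵] [DecidableEq 𝒵]
    (X : Fin n → 𝒳) (Y : Fin n → 𝒴) (Z : Fin n → 𝒵) :
    Sq X Z (Fintype.card 𝒳) (Fintype.card 𝒵) -
      Sq X (fun i => (Z i, Y i)) (Fintype.card 𝒳) (Fintype.card 𝒵 * Fintype.card 𝒴) =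
    Sq Y Z (Fintype.card 𝒴) (Fintype.card 𝒵) -
      Sq Y (fun i => (Z i, X i)) (Fintype.card 𝒴) (Fintype.card 𝒵 * Fintype.card 𝒳) := by
  rcases n.eq_zero_or_pos with rfl | hn
  · simp [Sq, regret_zero_right]
  have hX := Fintype.card_pos_iff.mpr ⟨X ⟨0, hn⟩⟩
  have hY := Fintype.card_pos_iff.mpr ⟨Y ⟨0, hn⟩⟩
  have hZ := Fintype.card_pos_iff.mpr ⟨Z ⟨0, hn⟩⟩
  have hent := empCondEnt_sub_empCondEnt_comm X Y Z
  have hreg := log_regret_div_sub_comm n hX hY hZ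
  unfold Sq
  linear_combination (n : ℝ) * hent + hreg
end
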